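/- If a is a bounded operator on H commuting with U* (U*a = aU*, i.e. a is weakly antiholomorphic), then a is automatically scalable: there exists a bounded operator b on H with a∘j = j∘b. -/

import Mathlib

/-!
Commuting with `U*`, a weighted backward shift with nonzero weights, forces `a` to be upper
triangular. For an upper triangular `a` the matrix of `j⁻¹ a j` is `q ^ (n - m) aₘₙ`, i.e. the
`d`-th superdiagonal of `a` scaled by `q ^ d`. Each superdiagonal is an operator of norm at most
`‖a‖`, so the series `∑ q ^ d (d-th superdiagonal)` converges in norm to the required `b`.
-/

open MeasureTheory InnerProductSpace

noncomputable section

/-- `H = ℓ²(ℕ, ℂ)`. -/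
abbrev H : Type := lp (fun _ : ℕ => ℂ) 2

/-- The standard orthonormal basis `e n` of `ℓ²(ℕ, ℂ)`. -/
noncomputable def e (n : ℕ) : H := lp.single 2 n 1

open scoped ENNReal ComplexConjugate
open ContinuousLinearMap

namespace Ell2

lemma e_apply (n k : ℕ) : e n k = if k = n then 1 else 0 := by
  simp [e, lp.single_apply, Pi.single_apply]

lemma norm_e (n : ℕ) : ‖e n‖ = 1 := by
  simp [e, lp.norm_single (E := fun _ : ℕ => ℂ) (p := 2) (by norm_num)]

lemma inner_e_left (n : ℕ) (x : H) : inner ℂ (e n) x = x n := by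
  simpa [e] using lp.inner_single_left (𝕜 := ℂ) n (1 : ℂ) x

lemma ext_e {F : Type*} [AddCommMonoid F] [Module ℂ F] [TopologicalSpace F] [T2Space F]
    {S T : H →L[ℂ] F} (h : ∀ n, S (e n) = T (e n)) : S = T :=
  lp.ext_continuousLinearMap ENNReal.ofNat_ne_top fun n => ext_ring (h n)

lemma tsum_apply_apply {T : ℕ → H →L[ℂ] H} (hT : Summable T) (x : H) (m : ℕ) :
    (∑' d, T d) x m = ∑' d, T d x m := by
  have := ((lp.evalCLM ℂ (fun _ : ℕ => ℂ) 2 m).comp (apply ℂ H x)).map_tsum hT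
  simpa [lp.evalCLM] using this

lemma apply_apply_eq_of_diagonal {r : ℕ → ℂ} {j : H →L[ℂ] H} (hj : ∀ n, j (e n) = r n • e n)
    (x : H) (m : ℕ) : j x m = r m * x m := by
  have : (lp.evalCLM ℂ (fun _ : ℕ => ℂ) 2 m).comp j = r m • lp.evalCLM ℂ (fun _ : ℕ => ℂ) 2 m :=
    ext_e fun n => by by_cases h : m = n <;> simp [lp.evalCLM, hj, e_apply, h]
  simpa [lp.evalCLM] using congrArg (fun T : H →L[ℂ] ℂ => T x) this

def entry (a : H →L[ℂ] H) (m n : ℕ) : ℂ := a (e n) m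

lemma norm_entry_le (a : H →L[ℂ] H) (m n : ℕ) : ‖entry a m n‖ ≤ ‖a‖ :=
  calc ‖entry a m n‖ ≤ ‖a (e n)‖ := lp.norm_apply_le_norm (by norm_num) (a (e n)) m
    _ ≤ ‖a‖ * ‖e n‖ := a.le_opNorm _
    _ = ‖a‖ := by rw [norm_e, mul_one]

section WeightedShift

variable {w : ℕ → ℂ} {U : H →L[ℂ] H}

lemma adjoint_apply_of_shift (hU : ∀ n, U (e n) = w n • e (n + 1)) (x : H) (m : ℕ) :
    adjoint U x m = conj (w m) * x (m + 1) := by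
  rw [← inner_e_left, adjoint_inner_right, hU, inner_smul_left, inner_e_left]

lemma adjoint_e_zero_of_shift (hU : ∀ n, U (e n) = w n • e (n + 1)) : adjoint U (e 0) = 0 :=
  lp.ext <| funext fun m => by simp [adjoint_apply_of_shift hU, e_apply]

lemma adjoint_e_succ_of_shift (hU : ∀ n, U (e n) = w n • e (n + 1)) (n : ℕ) :
    adjoint U (e (n + 1)) = conj (w n) • e n :=
  lp.ext <| funext fun m => by
    by_cases h : m = n <;> simp [adjoint_apply_of_shift hU, e_apply, h]

variable {a : H →L[ℂ] H}

lemma entry_eq_zero_of_commute_adjoint_shift (hU : ∀ n, U (e n) = w n • e (n + 1))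
    (hw : ∀ n, w n ≠ 0) (ha : (adjoint U).comp a = a.comp (adjoint U)) {m n : ℕ} (hnm : n < m) :
    entry a m n = 0 := by
  -- Entries of `U* a = a U*`: `w̄ₗ aₗ₊₁,₀ = 0` and `w̄ₗ aₗ₊₁,ₖ₊₁ = w̄ₖ aₗ,ₖ`; induct on the column.
  have hcomm : ∀ k l, conj (w l) * entry a (l + 1) k = a (adjoint U (e k)) l := fun k l => by
    rw [entry, ← adjoint_apply_of_shift hU, ← comp_apply, ha, comp_apply]
  have hw' : ∀ l, conj (w l) ≠ 0 := fun l => star_ne_zero.2 (hw l)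
  induction n generalizing m with
  | zero =>
    obtain ⟨l, rfl⟩ := Nat.exists_eq_succ_of_ne_zero hnm.ne'
    have h := hcomm 0 l
    rw [adjoint_e_zero_of_shift hU, map_zero] at h
    exact (mul_eq_zero.1 h).resolve_left (hw' l)
  | succ n ih =>
    obtain ⟨l, rfl⟩ := Nat.exists_eq_succ_of_ne_zero (by omega : m ≠ 0)
    have h := hcomm (n + 1) l
    rw [adjoint_e_succ_of_shift hU, map_smul, lp.coeFn_smul, Pi.smul_apply, smul_eq_mul,
      ← entry, ih (by omega), mul_zero] at h
    exact (mul_eq_zero.1 h).resolve_left (hw' l)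

end WeightedShift

section Superdiagonal

lemma sum_norm_rpow_superdiag_le (a : H →L[ℂ] H) (d : ℕ) (x : H) (s : Finset ℕ) :
    ∑ k ∈ s, ‖entry a k (k + d) * x (k + d)‖ ^ (2 : ℝ≥0∞).toReal
      ≤ (‖a‖ * ‖x‖) ^ (2 : ℝ≥0∞).toReal := by
  have ht : (0 : ℝ) < (2 : ℝ≥0∞).toReal := by norm_num
  calc ∑ k ∈ s, ‖entry a k (k + d) * x (k + d)‖ ^ (2 : ℝ≥0∞).toReal
      ≤ ∑ k ∈ s, ‖a‖ ^ (2 : ℝ≥0∞).toReal * ‖x (k + d)‖ ^ (2 : ℝ≥0∞).toReal :=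
        Finset.sum_le_sum fun k _ => by
          rw [norm_mul, Real.mul_rpow (norm_nonneg _) (norm_nonneg _)]
          gcongr
          exact norm_entry_le a _ _
    _ = ‖a‖ ^ (2 : ℝ≥0∞).toReal *
          ∑ i ∈ s.map (addRightEmbedding d), ‖x i‖ ^ (2 : ℝ≥0∞).toReal := by
        simp [Finset.mul_sum]
    _ ≤ (‖a‖ * ‖x‖) ^ (2 : ℝ≥0∞).toReal := by
        rw [Real.mul_rpow (norm_nonneg _) (norm_nonneg _)]
        gcongr
        exact lp.sum_rpow_le_norm_rpow ht x _

def superdiag (a : H →L[ℂ] H) (d : ℕ) : H →L[ℂ] H :=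
  LinearMap.mkContinuous
    { toFun := fun x => ⟨fun k => entry a k (k + d) * x (k + d),
        memℓp_gen' (sum_norm_rpow_superdiag_le a d x)⟩
      map_add' := fun x y => lp.ext <| funext fun k => mul_add _ _ _
      map_smul' := fun c x => lp.ext <| funext fun k => mul_left_comm _ _ _ }
    ‖a‖ fun x => lp.norm_le_of_forall_sum_le (by norm_num) (by positivity)
      (sum_norm_rpow_superdiag_le a d x)

lemma superdiag_apply (a : H →L[ℂ] H) (d : ℕ) (x : H) (k : ℕ) :
    superdiag a d x k = entry a k (k + d) * x (k + d) := rfl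

lemma norm_superdiag_le (a : H →L[ℂ] H) (d : ℕ) : ‖superdiag a d‖ ≤ ‖a‖ :=
  LinearMap.mkContinuous_norm_le _ (norm_nonneg a) _

end Superdiagonal

section Scaling

variable {r : ℂ}

lemma summable_pow_smul_superdiag (hr : ‖r‖ < 1) (a : H →L[ℂ] H) :
    Summable fun d => r ^ d • superdiag a d :=
  .of_norm_bounded ((summable_geometric_of_lt_one (norm_nonneg r) hr).mul_left ‖a‖) fun d =>
    calc ‖r ^ d • superdiag a d‖ ≤ ‖r ^ d‖ * ‖superdiag a d‖ := opNorm_smul_le _ _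
      _ ≤ ‖a‖ * ‖r‖ ^ d := by
        rw [norm_pow, mul_comm]
        gcongr
        exact norm_superdiag_le a d

/-- Formally `j⁻¹ a j` for `j = diag (r ^ n)`: the `d`-th superdiagonal is damped by `r ^ d`. -/
def rescale (a : H →L[ℂ] H) (r : ℂ) : H →L[ℂ] H := ∑' d, r ^ d • superdiag a d

lemma rescale_e_apply (hr : ‖r‖ < 1) (a : H →L[ℂ] H) (m n : ℕ) :
    rescale a r (e n) m = if m ≤ n then r ^ (n - m) * entry a m n else 0 := by
  rw [rescale, tsum_apply_apply (summable_pow_smul_superdiag hr a)]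
  simp only [smul_apply, lp.coeFn_smul, Pi.smul_apply, superdiag_apply, e_apply, smul_eq_mul]
  split_ifs with h
  · rw [tsum_eq_single (n - m) fun d hd => by simp [show m + d ≠ n by omega]]
    simp [Nat.add_sub_cancel' h]
  · simp [show ∀ d, m + d ≠ n by omega]

theorem exists_comp_diagonal_eq_diagonal_comp (hr : ‖r‖ < 1) {j : H →L[ℂ] H}
    (hj : ∀ n, j (e n) = r ^ n • e n) {a : H →L[ℂ] H} (ha : ∀ m n, n < m → entry a m n = 0) :
    ∃ b : H →L[ℂ] H, a.comp j = j.comp b := by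
  refine ⟨rescale a r, ext_e fun n => lp.ext <| funext fun m => ?_⟩
  rw [comp_apply, comp_apply, hj, map_smul, lp.coeFn_smul, Pi.smul_apply, smul_eq_mul, ← entry,
    apply_apply_eq_of_diagonal hj, rescale_e_apply hr]
  split_ifs with h
  · rw [← mul_assoc, ← pow_add, Nat.add_sub_cancel' h]
  · rw [ha m n (by omega), mul_zero, mul_zero]

end Scaling

end Ell2

theorem stmt17 (q : ℝ) (hq0 : 0 < q) (hq1 : q < 1)
    (U : H →L[ℂ] H)
    (hU : ∀ n : ℕ, U (e n) = (Real.sqrt (1 - q ^ (n + 1)) : ℂ) • e (n + 1))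
    (j : H →L[ℂ] H)
    (hj : ∀ n : ℕ, j (e n) = ((q : ℂ) ^ n) • e n)
    (a : H →L[ℂ] H)
    (ha : (ContinuousLinearMap.adjoint U).comp a = a.comp (ContinuousLinearMap.adjoint U)) :
    ∃ b : H →L[ℂ] H, a.comp j = j.comp b := by
  have hw : ∀ n, (Real.sqrt (1 - q ^ (n + 1)) : ℂ) ≠ 0 := fun n => by
    have : q ^ (n + 1) < 1 := pow_lt_one₀ hq0.le hq1 n.succ_ne_zero
    simpa [Real.sqrt_eq_zero'] using this
  have hr : ‖(q : ℂ)‖ < 1 := by rwa [Complex.norm_real, Real.norm_of_nonneg hq0.le]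
  exact Ell2.exists_comp_diagonal_eq_diagonal_comp hr hj
    fun m n => Ell2.entry_eq_zero_of_commute_adjoint_shift hU hw ha

end
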